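/- Let J₀ be the Bessel function of the first kind of order 0. Then for all ρ > 0 and ℓ ∈ (0,1], the quantity A₂(ρ,ℓ) := (1/ρ²)(1 − J₀(ρℓ) − log(ℓ)·ρℓ·J₁(ρℓ)) satisfies |A₂(ρ,ℓ)| ≤ C·min(1, ρ^{-3/2}) for some absolute constant C > 0, given the standard bounds |J₀(x) − 1| ≤ C₀ x², |J₁(x)| ≤ C₀ x for x ∈ [0,1] and |J_k(x)| ≤ C₁ x^{-1/2} for x ≥ 1 (k = 0, 1). -/

import Mathlib

lemma aux_log_stmt3 (t : ℝ) (h0 : 0 < t) (h1 : t ≤ 1) :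
    |Real.log t| * t ^ ((1:ℝ)/2) ≤ 2 := by
  have hle : Real.log t ≤ 0 := Real.log_nonpos h0.le h1
  rw [abs_of_nonpos hle]
  have hpos : (0:ℝ) < t ^ (-(1:ℝ)/2) := Real.rpow_pos_of_pos h0 _
  have h : Real.log (t ^ (-(1:ℝ)/2)) ≤ t ^ (-(1:ℝ)/2) :=
    (Real.log_le_sub_one_of_pos hpos).trans (by linarith)
  rw [Real.log_rpow h0] at h
  have hpos2 : (0:ℝ) ≤ t ^ ((1:ℝ)/2) := (Real.rpow_pos_of_pos h0 _).le
  have h2 := mul_le_mul_of_nonneg_right h hpos2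
  rw [← Real.rpow_add h0] at h2
  have he : (-(1:ℝ)/2 + (1:ℝ)/2) = 0 := by norm_num
  rw [he, Real.rpow_zero] at h2
  nlinarith

theorem stmt_3 (J0 J1 : ℝ → ℝ) (C0 C1 : ℝ)
    (hsmall0 : ∀ x ∈ Set.Icc (0:ℝ) 1, |J0 x - 1| ≤ C0 * x ^ 2)
    (hsmall1 : ∀ x ∈ Set.Icc (0:ℝ) 1, |J1 x| ≤ C0 * x)
    (hlarge0 : ∀ x : ℝ, 1 ≤ x → |J0 x| ≤ C1 * x ^ (-(1:ℝ)/2))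
    (hlarge1 : ∀ x : ℝ, 1 ≤ x → |J1 x| ≤ C1 * x ^ (-(1:ℝ)/2)) :
    ∃ C : ℝ, 0 < C ∧ ∀ ρ : ℝ, 0 < ρ → ∀ ℓ ∈ Set.Ioc (0:ℝ) 1,
      |(1 / ρ ^ 2) * (1 - J0 (ρ * ℓ) - Real.log ℓ * (ρ * ℓ) * J1 (ρ * ℓ))|
        ≤ C * min 1 (ρ ^ (-(3:ℝ)/2)) := by
  have hC0 : 0 ≤ C0 := by
    have := hsmall0 1 (by norm_num)
    nlinarith [abs_nonneg (J0 1 - 1)]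
  have hC1 : 0 ≤ C1 := by
    have := hlarge0 1 le_rfl
    rw [Real.one_rpow] at this
    nlinarith [abs_nonneg (J0 1)]
  refine ⟨3*C0 + 3*C1 + 1, by positivity, ?_⟩
  intro ρ hρ ℓ hℓ
  obtain ⟨hℓ0, hℓ1⟩ := hℓ
  set x := ρ * ℓ with hxdef
  have hx0 : 0 < x := mul_pos hρ hℓ0
  have hlog : |Real.log ℓ| * ℓ ^ ((1:ℝ)/2) ≤ 2 := aux_log_stmt3 ℓ hℓ0 hℓ1
  have hlogn : 0 ≤ |Real.log ℓ| := abs_nonneg _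
  have hmin0 : 0 ≤ min 1 (ρ ^ (-(3:ℝ)/2)) :=
    le_min zero_le_one (Real.rpow_pos_of_pos hρ _).le
  have hρ2 : (0:ℝ) < ρ ^ 2 := by positivity
  have habs : |(1 / ρ ^ 2) * (1 - J0 x - Real.log ℓ * x * J1 x)|
      ≤ (1 / ρ ^ 2) * (|J0 x - 1| + |Real.log ℓ| * x * |J1 x|) := by
    rw [abs_mul, abs_of_pos (by positivity : (0:ℝ) < 1 / ρ ^ 2)]
    gcongr
    calc |1 - J0 x - Real.log ℓ * x * J1 x|
        ≤ |1 - J0 x| + |Real.log ℓ * x * J1 x| := abs_sub _ _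
      _ = |J0 x - 1| + |Real.log ℓ| * x * |J1 x| := by
          rw [abs_sub_comm, abs_mul, abs_mul, abs_of_pos hx0]
  rcases le_or_gt x 1 with hx1 | hx1
  · -- small case
    have h0 := hsmall0 x ⟨hx0.le, hx1⟩
    have h1 := hsmall1 x ⟨hx0.le, hx1⟩
    have hl32n : (0:ℝ) ≤ ℓ ^ ((3:ℝ)/2) := (Real.rpow_pos_of_pos hℓ0 _).le
    have hl2 : ℓ ^ ((3:ℝ)/2) ≤ min 1 (ρ ^ (-(3:ℝ)/2)) := by
      apply le_min
      · calc ℓ ^ ((3:ℝ)/2) ≤ 1 ^ ((3:ℝ)/2) :=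
            Real.rpow_le_rpow hℓ0.le hℓ1 (by norm_num)
          _ = 1 := Real.one_rpow _
      · have hle : ℓ ≤ ρ⁻¹ := by
          rw [le_inv_comm₀ hℓ0 hρ]
          calc ρ ≤ ρ * ℓ * ℓ⁻¹ := by
                rw [mul_assoc, mul_inv_cancel₀ hℓ0.ne', mul_one]
            _ ≤ 1 * ℓ⁻¹ := by
                apply mul_le_mul_of_nonneg_right hx1 (by positivity)
            _ = ℓ⁻¹ := one_mul _
        calc ℓ ^ ((3:ℝ)/2) ≤ (ρ⁻¹) ^ ((3:ℝ)/2) :=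
            Real.rpow_le_rpow hℓ0.le hle (by norm_num)
          _ = ρ ^ (-(3:ℝ)/2) := by
            rw [← Real.rpow_neg_one ρ, ← Real.rpow_mul hρ.le]
            norm_num
    have h_a : ℓ ^ 2 ≤ ℓ ^ ((3:ℝ)/2) := by
      rw [← Real.rpow_natCast ℓ 2]
      exact Real.rpow_le_rpow_of_exponent_ge hℓ0 hℓ1 (by norm_num)
    have hsplit : ℓ ^ 2 = ℓ ^ ((1:ℝ)/2) * ℓ ^ ((3:ℝ)/2) := by
      rw [← Real.rpow_natCast ℓ 2, ← Real.rpow_add hℓ0]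
      norm_num
    have h_b : |Real.log ℓ| * ℓ ^ 2 ≤ 2 * ℓ ^ ((3:ℝ)/2) := by
      rw [hsplit, ← mul_assoc]
      exact mul_le_mul_of_nonneg_right hlog hl32n
    have hmid : (1 / ρ ^ 2) * (|J0 x - 1| + |Real.log ℓ| * x * |J1 x|)
        ≤ C0 * ℓ ^ 2 + C0 * (|Real.log ℓ| * ℓ ^ 2) := by
      have hstep : |J0 x - 1| + |Real.log ℓ| * x * |J1 x|
          ≤ C0 * x ^ 2 + |Real.log ℓ| * x * (C0 * x) := by
        gcongr
      calc (1 / ρ ^ 2) * (|J0 x - 1| + |Real.log ℓ| * x * |J1 x|)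
          ≤ (1 / ρ ^ 2) * (C0 * x ^ 2 + |Real.log ℓ| * x * (C0 * x)) := by
            apply mul_le_mul_of_nonneg_left hstep (by positivity)
        _ = C0 * ℓ ^ 2 + C0 * (|Real.log ℓ| * ℓ ^ 2) := by
            rw [hxdef]; field_simp
    have k1 : ℓ ^ 2 ≤ min 1 (ρ ^ (-(3:ℝ)/2)) := h_a.trans hl2
    have k2 : |Real.log ℓ| * ℓ ^ 2 ≤ 2 * min 1 (ρ ^ (-(3:ℝ)/2)) := by
      refine h_b.trans ?_
      linarith
    calc |(1 / ρ ^ 2) * (1 - J0 x - Real.log ℓ * x * J1 x)|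
        ≤ (1 / ρ ^ 2) * (|J0 x - 1| + |Real.log ℓ| * x * |J1 x|) := habs
      _ ≤ C0 * ℓ ^ 2 + C0 * (|Real.log ℓ| * ℓ ^ 2) := hmid
      _ ≤ (3*C0 + 3*C1 + 1) * min 1 (ρ ^ (-(3:ℝ)/2)) := by
          nlinarith [mul_le_mul_of_nonneg_left k1 hC0,
            mul_le_mul_of_nonneg_left k2 hC0, mul_nonneg hC1 hmin0]
  · -- large case
    have h0 := hlarge0 x hx1.le
    have h1 := hlarge1 x hx1.le
    have hρ1 : (1:ℝ) ≤ ρ := by nlinarith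
    have hxi : x ^ (-(1:ℝ)/2) ≤ 1 :=
      Real.rpow_le_one_of_one_le_of_nonpos hx1.le (by norm_num)
    have hxin : (0:ℝ) ≤ x ^ (-(1:ℝ)/2) := (Real.rpow_pos_of_pos hx0 _).le
    have hmineq : min 1 (ρ ^ (-(3:ℝ)/2)) = ρ ^ (-(3:ℝ)/2) :=
      min_eq_right (Real.rpow_le_one_of_one_le_of_nonpos hρ1 (by norm_num))
    have hx12 : x * x ^ (-(1:ℝ)/2) = x ^ ((1:ℝ)/2) := by
      nth_rewrite 1 [← Real.rpow_one x]
      rw [← Real.rpow_add hx0]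
      norm_num
    have hxsplit : x ^ ((1:ℝ)/2) = ρ ^ ((1:ℝ)/2) * ℓ ^ ((1:ℝ)/2) := by
      rw [hxdef]; exact Real.mul_rpow hρ.le hℓ0.le
    have hr12n : (0:ℝ) ≤ ρ ^ ((1:ℝ)/2) := (Real.rpow_pos_of_pos hρ _).le
    have hlogx : |Real.log ℓ| * x ^ ((1:ℝ)/2) ≤ 2 * ρ ^ ((1:ℝ)/2) := by
      rw [hxsplit, ← mul_assoc]
      calc |Real.log ℓ| * ρ ^ ((1:ℝ)/2) * ℓ ^ ((1:ℝ)/2)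
          = (|Real.log ℓ| * ℓ ^ ((1:ℝ)/2)) * ρ ^ ((1:ℝ)/2) := by ring
        _ ≤ 2 * ρ ^ ((1:ℝ)/2) := mul_le_mul_of_nonneg_right hlog hr12n
    have hr32 : (1 / ρ ^ 2) ≤ ρ ^ (-(3:ℝ)/2) := by
      rw [← Real.rpow_natCast ρ 2, one_div, ← Real.rpow_neg hρ.le]
      exact Real.rpow_le_rpow_of_exponent_le hρ1 (by norm_num)
    have hr12 : (1 / ρ ^ 2) * ρ ^ ((1:ℝ)/2) = ρ ^ (-(3:ℝ)/2) := by
      rw [← Real.rpow_natCast ρ 2, one_div, ← Real.rpow_neg hρ.le,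
        ← Real.rpow_add hρ]
      norm_num
    have hmid : (1 / ρ ^ 2) * (|J0 x - 1| + |Real.log ℓ| * x * |J1 x|)
        ≤ (1 + C1) * (1 / ρ ^ 2) + 2 * C1 * ((1 / ρ ^ 2) * ρ ^ ((1:ℝ)/2)) := by
      have hstep : |J0 x - 1| + |Real.log ℓ| * x * |J1 x|
          ≤ (1 + C1) + 2 * C1 * ρ ^ ((1:ℝ)/2) := by
        have e1 : |J0 x - 1| ≤ 1 + C1 := by
          have := abs_sub_abs_le_abs_sub (J0 x - 1) (-1)
          have h01 : |J0 x| ≤ C1 := by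
            calc |J0 x| ≤ C1 * x ^ (-(1:ℝ)/2) := h0
              _ ≤ C1 * 1 := mul_le_mul_of_nonneg_left hxi hC1
              _ = C1 := mul_one _
          calc |J0 x - 1| ≤ |J0 x| + |(1:ℝ)| := abs_sub _ _
            _ ≤ C1 + 1 := by rw [abs_one]; linarith
            _ = 1 + C1 := by ring
        have e2 : |Real.log ℓ| * x * |J1 x| ≤ 2 * C1 * ρ ^ ((1:ℝ)/2) := by
          calc |Real.log ℓ| * x * |J1 x|
              ≤ |Real.log ℓ| * x * (C1 * x ^ (-(1:ℝ)/2)) := by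
                apply mul_le_mul_of_nonneg_left h1 (by positivity)
            _ = C1 * (|Real.log ℓ| * (x * x ^ (-(1:ℝ)/2))) := by ring
            _ = C1 * (|Real.log ℓ| * x ^ ((1:ℝ)/2)) := by rw [hx12]
            _ ≤ C1 * (2 * ρ ^ ((1:ℝ)/2)) :=
                mul_le_mul_of_nonneg_left hlogx hC1
            _ = 2 * C1 * ρ ^ ((1:ℝ)/2) := by ring
        linarith
      calc (1 / ρ ^ 2) * (|J0 x - 1| + |Real.log ℓ| * x * |J1 x|)
          ≤ (1 / ρ ^ 2) * ((1 + C1) + 2 * C1 * ρ ^ ((1:ℝ)/2)) := by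
            apply mul_le_mul_of_nonneg_left hstep (by positivity)
        _ = (1 + C1) * (1 / ρ ^ 2) + 2 * C1 * ((1 / ρ ^ 2) * ρ ^ ((1:ℝ)/2)) := by
            ring
    rw [hmineq]
    calc |(1 / ρ ^ 2) * (1 - J0 x - Real.log ℓ * x * J1 x)|
        ≤ (1 / ρ ^ 2) * (|J0 x - 1| + |Real.log ℓ| * x * |J1 x|) := habs
      _ ≤ (1 + C1) * (1 / ρ ^ 2) + 2 * C1 * ((1 / ρ ^ 2) * ρ ^ ((1:ℝ)/2)) := hmid
      _ ≤ (1 + C1) * ρ ^ (-(3:ℝ)/2) + 2 * C1 * ρ ^ (-(3:ℝ)/2) := by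
          rw [hr12]
          gcongr
      _ ≤ (3*C0 + 3*C1 + 1) * ρ ^ (-(3:ℝ)/2) := by
          have : (0:ℝ) ≤ ρ ^ (-(3:ℝ)/2) := (Real.rpow_pos_of_pos hρ _).le
          nlinarith
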